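/- arXiv:2112.11415 — 2 statements merged into one kernel-verified Lean document; each statement's English description precedes it below -/
import Mathlib

section
/- Let 0 < r₀ < 1, k a positive integer, and σ > 0 with σ ≠ k. The function u(r,θ) = e^{ikθ}(r^k + ((k−σ)/(k+σ)) r^{−k}) on the annulus r₀ ≤ r ≤ 1 is harmonic on the open annulus, and u satisfies both Steklov boundary conditions ∂_r u(1,θ) = σ u(1,θ) at r = 1 (outer normal ∂_r) and −∂_r u(r₀,θ) = σ u(r₀,θ) at r = r₀ (outer normal −∂_r) if and only if p_k(σ) := σ² − σ k ((1+r₀)/r₀)((1+r₀^{2k})/(1−r₀^{2k})) + k²/r₀ = 0. -/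
open Real Complex

lemma pow_deriv_cast (m : ℕ) (x : ℂ) (hx : x ≠ 0) : (m:ℂ) * x^(m-1) = m * x^m / x := by
  cases m with
  | zero => simp
  | succ n => rw [Nat.add_sub_cancel, pow_succ]; field_simp

lemma hasDerivAt_aux2 (n p : ℕ) (a b : ℂ) (t : ℝ) (ht : t ≠ 0) :
    HasDerivAt (fun s : ℝ => a * (s:ℂ)^n + b * ((s:ℂ)^p)⁻¹)
      (a * ((n:ℂ) * (t:ℂ)^(n-1)) + b * (-((p:ℂ) * (t:ℂ)^(p-1)) / ((t:ℂ)^p)^2)) t := by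
  have hx : (t:ℂ) ≠ 0 := Complex.ofReal_ne_zero.mpr ht
  exact (((hasDerivAt_pow n (t:ℂ)).const_mul a).add
    (((hasDerivAt_pow p (t:ℂ)).inv (pow_ne_zero _ hx)).const_mul b)).comp_ofReal

lemma hasDerivAt_exp_aux (K : ℂ) (θ : ℝ) (F : ℂ) :
    HasDerivAt (fun s : ℝ => Complex.exp (Complex.I * K * s) * F)
      (Complex.I * K * Complex.exp (Complex.I * K * θ) * F) θ := by
  have h : HasDerivAt (fun z : ℂ => Complex.exp (Complex.I * K * z))
      (Complex.I * K * Complex.exp (Complex.I * K * θ)) (θ:ℂ) := by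
    simpa [mul_comm] using ((hasDerivAt_id (θ:ℂ)).const_mul (Complex.I * K)).cexp
  exact (h.comp_ofReal).mul_const F

lemma key_real (m : ℕ) (y σ : ℝ) (hy : 0 < y) (hy1 : y < 1) (hσ : 0 < σ) :
    (-(((m:ℝ)+1) * y^m + (((m:ℝ)+1 - σ)/((m:ℝ)+1+σ)) * (-(((m:ℝ)+1) * y^m) / (y^(m+1))^2))
        = σ * (y^(m+1) + (((m:ℝ)+1 - σ)/((m:ℝ)+1+σ)) * (y^(m+1))⁻¹))
      ↔ (σ^2 - σ*((m:ℝ)+1)*((1+y)/y)*((1+y^(2*m+2))/(1-y^(2*m+2))) + ((m:ℝ)+1)^2/y = 0) := by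
  have hy0 : y ≠ 0 := ne_of_gt hy
  have hKσ : (m:ℝ)+1+σ ≠ 0 := by positivity
  have hY : y^(2*m+2) < 1 := by
    apply pow_lt_one₀ hy.le hy1; omega
  have hYne : 1 - y^(2*m+2) ≠ 0 := by nlinarith
  have hM : ((((m:ℝ)+1)+σ) * y^(2*m+2)) ≠ 0 := by positivity
  have hM2 : y*(1-y^(2*m+2)) ≠ 0 := mul_ne_zero hy0 hYne
  have hym : y^m ≠ 0 := pow_ne_zero _ hy0
  have key : (-(((m:ℝ)+1) * y^m + (((m:ℝ)+1 - σ)/((m:ℝ)+1+σ)) * (-(((m:ℝ)+1) * y^m) / (y^(m+1))^2))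
      - σ * (y^(m+1) + (((m:ℝ)+1 - σ)/((m:ℝ)+1+σ)) * (y^(m+1))⁻¹))
      * ((((m:ℝ)+1)+σ) * y^(2*m+2)) =
    y^m * ((((m:ℝ)+1) - σ)*(((m:ℝ)+1) - σ*y) - y^(2*m+2)*(((m:ℝ)+1) + σ)*(((m:ℝ)+1) + σ*y)) := by
    field_simp
    ring
  have key2 : (σ^2 - σ*((m:ℝ)+1)*((1+y)/y)*((1+y^(2*m+2))/(1-y^(2*m+2))) + ((m:ℝ)+1)^2/y)
      * (y*(1-y^(2*m+2))) =
    ((((m:ℝ)+1) - σ)*(((m:ℝ)+1) - σ*y) - y^(2*m+2)*(((m:ℝ)+1) + σ)*(((m:ℝ)+1) + σ*y)) := by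
    field_simp
    ring
  rw [← sub_eq_zero]
  constructor
  · intro h
    have h2 : y^m * ((((m:ℝ)+1) - σ)*(((m:ℝ)+1) - σ*y)
        - y^(2*m+2)*(((m:ℝ)+1) + σ)*(((m:ℝ)+1) + σ*y)) = 0 := by
      rw [← key, h, zero_mul]
    have h3 : (((m:ℝ)+1) - σ)*(((m:ℝ)+1) - σ*y)
        - y^(2*m+2)*(((m:ℝ)+1) + σ)*(((m:ℝ)+1) + σ*y) = 0 :=
      (mul_eq_zero.mp h2).resolve_left hym
    have h4 : (σ^2 - σ*((m:ℝ)+1)*((1+y)/y)*((1+y^(2*m+2))/(1-y^(2*m+2))) + ((m:ℝ)+1)^2/y)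
        * (y*(1-y^(2*m+2))) = 0 := by rw [key2, h3]
    exact (mul_eq_zero.mp h4).resolve_right hM2
  · intro h
    have h3 : (((m:ℝ)+1) - σ)*(((m:ℝ)+1) - σ*y)
        - y^(2*m+2)*(((m:ℝ)+1) + σ)*(((m:ℝ)+1) + σ*y) = 0 := by
      rw [← key2, h, zero_mul]
    have h2 : (-(((m:ℝ)+1) * y^m + (((m:ℝ)+1 - σ)/((m:ℝ)+1+σ)) * (-(((m:ℝ)+1) * y^m) / (y^(m+1))^2))
        - σ * (y^(m+1) + (((m:ℝ)+1 - σ)/((m:ℝ)+1+σ)) * (y^(m+1))⁻¹))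
        * ((((m:ℝ)+1)+σ) * y^(2*m+2)) = 0 := by rw [key, h3, mul_zero]
    exact (mul_eq_zero.mp h2).resolve_right hM

/-- On the annulus `r₀ ≤ r ≤ 1`, the function `u(r,θ) = e^{ikθ}(r^k + ((k−σ)/(k+σ)) r^{−k})`
is harmonic (polar Laplacian), and it satisfies both Steklov boundary conditions
(`∂_r u = σ u` at `r = 1` and `−∂_r u = σ u` at `r = r₀`) if and only if
`p_k(σ) = σ² − σk((1+r₀)/r₀)((1+r₀^{2k})/(1−r₀^{2k})) + k²/r₀ = 0`. -/
theorem annulus_steklov_characterization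
    (r₀ : ℝ) (hr₀ : 0 < r₀) (hr₀' : r₀ < 1)
    (k : ℕ) (hk : 1 ≤ k) (σ : ℝ) (hσ : 0 < σ) (hσk : σ ≠ k)
    (u : ℝ → ℝ → ℂ)
    (hu : ∀ r θ : ℝ, u r θ =
      Complex.exp (Complex.I * k * θ) *
        ((r : ℂ) ^ k + (((k : ℂ) - σ) / ((k : ℂ) + σ)) * ((r : ℂ) ^ k)⁻¹)) :
    (∀ r θ : ℝ, r₀ < r → r < 1 →
        deriv (deriv (fun t => u t θ)) r + (1 / (r : ℂ)) * deriv (fun t => u t θ) r +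
          (1 / (r : ℂ) ^ 2) * deriv (deriv (fun s => u r s)) θ = 0) ∧
    (((∀ θ : ℝ, deriv (fun t => u t θ) 1 = (σ : ℂ) * u 1 θ) ∧
        (∀ θ : ℝ, -deriv (fun t => u t θ) r₀ = (σ : ℂ) * u r₀ θ)) ↔
      σ ^ 2 - σ * k * ((1 + r₀) / r₀) * ((1 + r₀ ^ (2 * k)) / (1 - r₀ ^ (2 * k))) +
          (k : ℝ) ^ 2 / r₀ = 0) := by
  obtain ⟨m, rfl⟩ : ∃ m, k = m + 1 := ⟨k - 1, (Nat.succ_pred_eq_of_pos hk).symm⟩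
  set c : ℂ := ((((m:ℂ)+1) - σ) / (((m:ℂ)+1) + σ)) with hcdef
  set E : ℝ → ℂ := fun θ => Complex.exp (Complex.I * ((m:ℂ)+1) * θ) with hE
  have hEne : ∀ θ, E θ ≠ 0 := fun θ => Complex.exp_ne_zero _
  have hKσ : ((m:ℂ)+1) + (σ:ℂ) ≠ 0 := by
    have h1 : ((m+1:ℝ) + σ : ℝ) ≠ 0 := by positivity
    have := Complex.ofReal_ne_zero.mpr h1
    push_cast at this ⊢
    convert this using 2 <;> ring
  have hu' : ∀ θ : ℝ, (fun t : ℝ => u t θ) =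
      fun t : ℝ => E θ * ((t:ℂ)^(m+1) + c * ((t:ℂ)^(m+1))⁻¹) := by
    intro θ; funext t; rw [hu]; simp only [hE]; push_cast; ring
  -- first radial derivative
  have hd1 : ∀ (θ t : ℝ), t ≠ 0 → HasDerivAt (fun t : ℝ => u t θ)
      (E θ * ((((m:ℂ)+1) * (t:ℂ)^m) + c * (-(((m:ℂ)+1) * (t:ℂ)^m) / ((t:ℂ)^(m+1))^2))) t := by
    intro θ t ht
    rw [hu' θ]
    have := (hasDerivAt_aux2 (m+1) (m+1) 1 c t ht).const_mul (E θ)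
    simpa [Nat.add_sub_cancel] using this
  have hderiv1 : ∀ (θ t : ℝ), t ≠ 0 → deriv (fun t : ℝ => u t θ) t =
      E θ * ((((m:ℂ)+1) * (t:ℂ)^m) + c * (-(((m:ℂ)+1) * (t:ℂ)^m) / ((t:ℂ)^(m+1))^2)) := by
    intro θ t ht; exact (hd1 θ t ht).deriv
  -- second radial derivative
  have hd2 : ∀ (θ r : ℝ), r ≠ 0 → deriv (deriv (fun t : ℝ => u t θ)) r =
      (E θ * ((m:ℂ)+1)) * ((m:ℂ) * (r:ℂ)^(m-1)) +
        (E θ * (-(c*((m:ℂ)+1)))) * (-(((m:ℂ)+2) * (r:ℂ)^(m+1)) / ((r:ℂ)^(m+2))^2) := by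
    intro θ r hr
    have hev : deriv (fun t : ℝ => u t θ) =ᶠ[nhds r]
        (fun t : ℝ => (E θ * ((m:ℂ)+1)) * (t:ℂ)^m +
          (E θ * (-(c*((m:ℂ)+1)))) * ((t:ℂ)^(m+2))⁻¹) := by
      filter_upwards [eventually_ne_nhds hr] with t ht
      have hx : (t:ℂ) ≠ 0 := Complex.ofReal_ne_zero.mpr ht
      rw [hderiv1 θ t ht]
      field_simp
      ring
    rw [hev.deriv_eq]
    have := (hasDerivAt_aux2 m (m+2) (E θ * ((m:ℂ)+1)) (E θ * (-(c*((m:ℂ)+1)))) r hr).deriv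
    rw [this]
    norm_num
  -- angular second derivative
  have hdθ : ∀ (r θ : ℝ), deriv (deriv (fun s : ℝ => u r s)) θ =
      -(((m:ℂ)+1)^2) * E θ * ((r:ℂ)^(m+1) + c * ((r:ℂ)^(m+1))⁻¹) := by
    intro r θ
    set F : ℂ := ((r:ℂ)^(m+1) + c * ((r:ℂ)^(m+1))⁻¹) with hF
    have hfun : (fun s : ℝ => u r s) =
        fun s : ℝ => Complex.exp (Complex.I * ((m:ℂ)+1) * s) * F := by
      funext s; rw [hu]; push_cast; ring
    have h1 : deriv (fun s : ℝ => u r s) =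
        fun θ' : ℝ => Complex.exp (Complex.I * ((m:ℂ)+1) * θ') * (Complex.I * ((m:ℂ)+1) * F) := by
      funext θ'
      rw [hfun, (hasDerivAt_exp_aux ((m:ℂ)+1) θ' F).deriv]
      ring
    rw [h1, (hasDerivAt_exp_aux ((m:ℂ)+1) θ (Complex.I * ((m:ℂ)+1) * F)).deriv]
    simp only [hE]
    linear_combination (((m:ℂ)+1)^2 * Complex.exp (Complex.I * ((m:ℂ)+1) * θ) * F) * Complex.I_mul_I
  constructor
  · -- harmonicity
    intro r θ hr1 hr2
    have hrpos : 0 < r := lt_trans hr₀ hr1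
    have hrne : r ≠ 0 := ne_of_gt hrpos
    have hx : (r:ℂ) ≠ 0 := Complex.ofReal_ne_zero.mpr hrne
    rw [hd2 θ r hrne, hderiv1 θ r hrne, hdθ r θ, pow_deriv_cast m _ hx]
    field_simp
    ring
  · -- boundary conditions
    have hKσ' : (1:ℂ) + (m:ℂ) + (σ:ℂ) ≠ 0 := by
      intro h; apply hKσ; linear_combination h
    have houter : ∀ θ : ℝ, deriv (fun t : ℝ => u t θ) 1 = (σ:ℂ) * u 1 θ := by
      intro θ
      rw [hderiv1 θ 1 one_ne_zero, hu]
      push_cast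
      simp only [one_pow, Complex.ofReal_one, inv_one, mul_one, div_one]
      rw [show Complex.exp (Complex.I * ((m:ℂ)+1) * θ) = E θ from rfl]
      rw [hcdef]
      field_simp
      ring
    have hinner_iff : ∀ θ : ℝ,
        (-deriv (fun t : ℝ => u t θ) r₀ = (σ:ℂ) * u r₀ θ) ↔
        (-((((m:ℂ)+1) * (r₀:ℂ)^m) + c * (-(((m:ℂ)+1) * (r₀:ℂ)^m) / (((r₀:ℂ))^(m+1))^2))
          = (σ:ℂ) * (((r₀:ℂ))^(m+1) + c * (((r₀:ℂ))^(m+1))⁻¹)) := by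
      intro θ
      rw [hderiv1 θ r₀ (ne_of_gt hr₀), hu]
      have heq : Complex.exp (Complex.I * ((m+1:ℕ):ℂ) * θ) = E θ := by push_cast; rfl
      rw [heq]
      push_cast
      constructor
      · intro h
        have h' : E θ * (-((((m:ℂ)+1) * (r₀:ℂ)^m) + c * (-(((m:ℂ)+1) * (r₀:ℂ)^m) / (((r₀:ℂ))^(m+1))^2)))
            = E θ * ((σ:ℂ) * (((r₀:ℂ))^(m+1) + c * (((r₀:ℂ))^(m+1))⁻¹)) := by
          rw [hcdef] at h ⊢; linear_combination h
        exact mul_left_cancel₀ (hEne θ) h'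
      · intro h
        rw [hcdef] at h ⊢
        linear_combination E θ * h
    have hcast : (-((((m:ℂ)+1) * (r₀:ℂ)^m) + c * (-(((m:ℂ)+1) * (r₀:ℂ)^m) / (((r₀:ℂ))^(m+1))^2))
          = (σ:ℂ) * (((r₀:ℂ))^(m+1) + c * (((r₀:ℂ))^(m+1))⁻¹)) ↔
        (-(((m:ℝ)+1) * r₀^m + (((m:ℝ)+1 - σ)/((m:ℝ)+1+σ)) * (-(((m:ℝ)+1) * r₀^m) / (r₀^(m+1))^2))
          = σ * (r₀^(m+1) + (((m:ℝ)+1 - σ)/((m:ℝ)+1+σ)) * (r₀^(m+1))⁻¹)) := by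
      rw [hcdef]
      constructor <;> intro h <;> exact_mod_cast h
    have hp : (σ^2 - σ*((m:ℝ)+1)*((1+r₀)/r₀)*((1+r₀^(2*m+2))/(1-r₀^(2*m+2))) + ((m:ℝ)+1)^2/r₀ = 0)
        ↔ (σ ^ 2 - σ * ((m+1:ℕ):ℝ) * ((1 + r₀) / r₀) *
            ((1 + r₀ ^ (2 * (m+1))) / (1 - r₀ ^ (2 * (m+1)))) + (((m+1:ℕ)):ℝ) ^ 2 / r₀ = 0) := by
      have h2 : 2*(m+1) = 2*m+2 := by ring
      rw [h2]; push_cast; tauto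
    constructor
    · rintro ⟨-, h2⟩
      rw [← hp, ← key_real m r₀ σ hr₀ hr₀' hσ, ← hcast, ← hinner_iff 0]
      exact h2 0
    · intro h
      refine ⟨houter, fun θ => ?_⟩
      rw [hinner_iff θ, hcast, key_real m r₀ σ hr₀ hr₀' hσ, hp]
      exact h
end

section
/- Let 0 < r₀ < 1 and k ≥ 1, and let p_k(σ) = σ² − σ k ((1+r₀)/r₀)((1+r₀^{2k})/(1−r₀^{2k})) + k²/r₀. Then p_k has two real roots σ_{k,1} < σ_{k,2}, and there is a constant C = C(r₀) such that |σ_{k,1} − k| ≤ C k r₀^{2k} and |σ_{k,2} − k/r₀| ≤ C k r₀^{2k}. -/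
open Real

set_option maxHeartbeats 1000000 in
private lemma annulus_aux (r₀ q kk : ℝ) (hr₀ : 0 < r₀) (hr₀' : r₀ < 1)
    (hk1 : 1 ≤ kk) (hq0 : 0 < q) (hqr : q ≤ r₀ ^ 2) :
    ∃ σ₁ σ₂ : ℝ, σ₁ < σ₂ ∧
      (σ₁ ^ 2 - σ₁ * kk * ((1 + r₀) / r₀) * ((1 + q) / (1 - q)) + kk ^ 2 / r₀ = 0) ∧
      (σ₂ ^ 2 - σ₂ * kk * ((1 + r₀) / r₀) * ((1 + q) / (1 - q)) + kk ^ 2 / r₀ = 0) ∧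
      |σ₁ - kk| ≤ (2 * (1 + r₀) / (r₀ * (1 - r₀ ^ 2))) *
          (1 + 3 * (1 + r₀) / (2 * (1 - r₀) * (1 - r₀ ^ 2))) * kk * q ∧
      |σ₂ - kk / r₀| ≤ (2 * (1 + r₀) / (r₀ * (1 - r₀ ^ 2))) *
          (1 + 3 * (1 + r₀) / (2 * (1 - r₀) * (1 - r₀ ^ 2))) * kk * q := by
  have h1 : 0 < 1 - r₀ := by linarith
  have h2 : 0 < 1 - r₀ ^ 2 := by nlinarith
  have hkpos : (0 : ℝ) < kk := by linarith
  have hq1 : q < 1 := lt_of_le_of_lt hqr (by nlinarith)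
  have h1q : 0 < 1 - q := by linarith
  obtain ⟨A, hA⟩ : ∃ x : ℝ, x = 2 * (1 + r₀) / (r₀ * (1 - r₀ ^ 2)) := ⟨_, rfl⟩
  obtain ⟨B, hB⟩ : ∃ x : ℝ, x = 3 * (1 + r₀) / (2 * (1 - r₀) * (1 - r₀ ^ 2)) := ⟨_, rfl⟩
  have hApos : 0 < A := by rw [hA]; positivity
  have hBpos : 0 < B := by rw [hB]; positivity
  obtain ⟨S₀, hS₀⟩ : ∃ x : ℝ, x = kk * (1 + r₀) / r₀ := ⟨_, rfl⟩
  obtain ⟨s₀, hs₀⟩ : ∃ x : ℝ, x = kk * (1 - r₀) / r₀ := ⟨_, rfl⟩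
  obtain ⟨S, hS⟩ : ∃ x : ℝ, x = kk * ((1 + r₀) / r₀) * ((1 + q) / (1 - q)) := ⟨_, rfl⟩
  have hS₀pos : 0 < S₀ := by rw [hS₀]; positivity
  have hs₀pos : 0 < s₀ := by rw [hs₀]; positivity
  have hSpos : 0 < S := by
    rw [hS]
    exact mul_pos (mul_pos hkpos (div_pos (by linarith) hr₀)) (div_pos (by linarith) h1q)
  have hEval : S - S₀ = (kk * (1 + r₀) / r₀) * (2 * q / (1 - q)) := by
    rw [hS, hS₀]; field_simp; ring
  have hEpos : 0 < S - S₀ := by rw [hEval]; positivity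
  have hEle : S - S₀ ≤ A * kk * q := by
    rw [hEval, hA]
    have e1 : kk * (1 + r₀) / r₀ * (2 * q / (1 - q))
        = (2 * kk * (1 + r₀) * q) / (r₀ * (1 - q)) := by
      rw [div_mul_div_comm]; ring
    have e2 : 2 * (1 + r₀) / (r₀ * (1 - r₀ ^ 2)) * kk * q
        = (2 * kk * (1 + r₀) * q) / (r₀ * (1 - r₀ ^ 2)) := by
      rw [div_mul_eq_mul_div, div_mul_eq_mul_div]; ring
    rw [e1, e2, div_le_div_iff₀ (by positivity) (by positivity)]
    have hX : (0 : ℝ) ≤ 2 * kk * (1 + r₀) * q := by positivity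
    nlinarith [mul_nonneg (mul_nonneg hX hr₀.le) (sub_nonneg.2 hqr)]
  have hD₀val : S₀ ^ 2 - 4 * (kk ^ 2 / r₀) = s₀ ^ 2 := by
    rw [hS₀, hs₀]; field_simp; ring
  have hDpos : 0 < S ^ 2 - 4 * (kk ^ 2 / r₀) := by
    have h7 : s₀ ^ 2 ≤ S ^ 2 - 4 * (kk ^ 2 / r₀) := by
      rw [← hD₀val]
      nlinarith [mul_pos hEpos (by linarith : (0:ℝ) < S + S₀)]
    linarith [pow_pos hs₀pos 2]
  obtain ⟨s, hs_def⟩ : ∃ x : ℝ, x = Real.sqrt (S ^ 2 - 4 * (kk ^ 2 / r₀)) := ⟨_, rfl⟩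
  have hs_nonneg : 0 ≤ s := hs_def ▸ Real.sqrt_nonneg _
  have hs_sq : s ^ 2 = S ^ 2 - 4 * (kk ^ 2 / r₀) := hs_def ▸ Real.sq_sqrt hDpos.le
  have hdiff : s ^ 2 - s₀ ^ 2 = (S - S₀) * (S + S₀) := by
    rw [hs_sq, ← hD₀val]; ring
  have hs_ge : s₀ ≤ s := by nlinarith [hdiff, hS₀pos, hSpos, hEpos]
  have hs_pos : 0 < s := lt_of_lt_of_le hs₀pos hs_ge
  -- bound S + S₀
  have hfac : (1 + q) / (1 - q) ≤ 2 / (1 - r₀ ^ 2) := by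
    rw [div_le_div_iff₀ h1q h2]; nlinarith
  have hSle : S ≤ S₀ * (2 / (1 - r₀ ^ 2)) := by
    rw [hS, hS₀]
    calc kk * ((1 + r₀) / r₀) * ((1 + q) / (1 - q))
        ≤ kk * ((1 + r₀) / r₀) * (2 / (1 - r₀ ^ 2)) := by
          apply mul_le_mul_of_nonneg_left hfac; positivity
      _ = kk * (1 + r₀) / r₀ * (2 / (1 - r₀ ^ 2)) := by ring
  have hsum : S + S₀ ≤ 3 * S₀ / (1 - r₀ ^ 2) := by
    have hS₀le : S₀ ≤ S₀ / (1 - r₀ ^ 2) := by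
      rw [le_div_iff₀ h2]; nlinarith
    have e3 : S₀ * (2 / (1 - r₀ ^ 2)) = 2 * S₀ / (1 - r₀ ^ 2) := by ring
    have e4 : 3 * S₀ / (1 - r₀ ^ 2) = 2 * S₀ / (1 - r₀ ^ 2) + S₀ / (1 - r₀ ^ 2) := by ring
    rw [e3] at hSle
    linarith
  have hkey2 : 3 * S₀ / (1 - r₀ ^ 2) = 2 * s₀ * B := by
    rw [hS₀, hs₀, hB]; field_simp
  have hsub : s - s₀ ≤ (S - S₀) * B := by
    have h3 : 2 * s₀ * (s - s₀) ≤ (S - S₀) * (2 * s₀ * B) := by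
      calc 2 * s₀ * (s - s₀) ≤ s ^ 2 - s₀ ^ 2 := by nlinarith [sq_nonneg (s - s₀)]
        _ = (S - S₀) * (S + S₀) := hdiff
        _ ≤ (S - S₀) * (3 * S₀ / (1 - r₀ ^ 2)) :=
            mul_le_mul_of_nonneg_left hsum hEpos.le
        _ = (S - S₀) * (2 * s₀ * B) := by rw [hkey2]
    have h4 : 2 * s₀ * (s - s₀) ≤ 2 * s₀ * ((S - S₀) * B) := by linarith
    exact le_of_mul_le_mul_left h4 (by positivity)
  refine ⟨(S - s) / 2, (S + s) / 2, by linarith, ?_, ?_, ?_, ?_⟩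
  · linear_combination (1 / 4 : ℝ) * hs_sq + ((S - s) / 2) * hS
  · linear_combination (1 / 4 : ℝ) * hs_sq + ((S + s) / 2) * hS
  · have hSs : S₀ - s₀ = 2 * kk := by rw [hS₀, hs₀]; field_simp; ring
    have heq : (S - s) / 2 - kk = ((S - S₀) - (s - s₀)) / 2 := by linarith
    rw [heq, ← hA, ← hB, abs_le]
    have h5 : (S - S₀) * B ≤ A * kk * q * B :=
      mul_le_mul_of_nonneg_right hEle hBpos.le
    have h6 : 0 < A * kk * q := by positivity
    have h7 : A * (1 + B) * kk * q = A * kk * q + A * kk * q * B := by ring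
    have h8 : 0 < A * kk * q * B := mul_pos h6 hBpos
    constructor
    · linarith
    · linarith
  · have hSs : S₀ + s₀ = 2 * (kk / r₀) := by rw [hS₀, hs₀]; field_simp; ring
    have heq : (S + s) / 2 - kk / r₀ = ((S - S₀) + (s - s₀)) / 2 := by linarith
    rw [heq, ← hA, ← hB, abs_le]
    have h5 : (S - S₀) * B ≤ A * kk * q * B :=
      mul_le_mul_of_nonneg_right hEle hBpos.le
    have h6 : 0 < A * kk * q := by positivity
    have h7 : A * (1 + B) * kk * q = A * kk * q + A * kk * q * B := by ring
    have h8 : 0 < A * kk * q * B := mul_pos h6 hBpos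
    constructor
    · linarith
    · linarith

/-- For `0 < r₀ < 1`, there is a constant `C = C(r₀) > 0` such that for every `k ≥ 1` the
quadratic `p_k(σ) = σ² − σk((1+r₀)/r₀)((1+r₀^{2k})/(1−r₀^{2k})) + k²/r₀` has two real roots
`σ_{k,1} < σ_{k,2}` with `|σ_{k,1} − k| ≤ C k r₀^{2k}` and `|σ_{k,2} − k/r₀| ≤ C k r₀^{2k}`. -/
theorem annulus_eigenvalue_asymptotics (r₀ : ℝ) (hr₀ : 0 < r₀) (hr₀' : r₀ < 1) :
    ∃ C > 0, ∀ k : ℕ, 1 ≤ k →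
      ∃ σ₁ σ₂ : ℝ, σ₁ < σ₂ ∧
        (σ₁ ^ 2 - σ₁ * k * ((1 + r₀) / r₀) * ((1 + r₀ ^ (2 * k)) / (1 - r₀ ^ (2 * k))) +
            (k : ℝ) ^ 2 / r₀ = 0) ∧
        (σ₂ ^ 2 - σ₂ * k * ((1 + r₀) / r₀) * ((1 + r₀ ^ (2 * k)) / (1 - r₀ ^ (2 * k))) +
            (k : ℝ) ^ 2 / r₀ = 0) ∧
        |σ₁ - k| ≤ C * k * r₀ ^ (2 * k) ∧
        |σ₂ - k / r₀| ≤ C * k * r₀ ^ (2 * k) := by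
  have h1 : 0 < 1 - r₀ := by linarith
  have h2 : 0 < 1 - r₀ ^ 2 := by nlinarith
  refine ⟨(2 * (1 + r₀) / (r₀ * (1 - r₀ ^ 2))) *
      (1 + 3 * (1 + r₀) / (2 * (1 - r₀) * (1 - r₀ ^ 2))), by positivity, ?_⟩
  intro k hk
  have hk1 : (1 : ℝ) ≤ (k : ℝ) := by exact_mod_cast hk
  have hq0 : 0 < r₀ ^ (2 * k) := by positivity
  have hqr : r₀ ^ (2 * k) ≤ r₀ ^ 2 :=
    pow_le_pow_of_le_one hr₀.le hr₀'.le (by omega)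
  exact annulus_aux r₀ (r₀ ^ (2 * k)) (k : ℝ) hr₀ hr₀' hk1 hq0 hqr
end
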